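/- arXiv:2108.02135 — 5 statements merged into one kernel-verified Lean document; each statement's English description precedes it below -/
import Mathlib

section
/- Let N ∈ (1,∞), p ∈ (1,N) be real, p* := pN/(N−p), and b > 0. Define v_b : [0,∞) → ℝ by v_b(r) := (1 + b·r^{p/(p−1)})^{(p−N)/p}. Then both of the following quantities are finite and they are equal: (σ_{N−1} ∫₀^∞ v_b(t)^{p*} t^{N−1} dt)^{1/p*} = Eucl(N,p) · (σ_{N−1} ∫₀^∞ |v_b'(t)|^{p} t^{N−1} dt)^{1/p}, where v_b' denotes the (everywhere defined on (0,∞)) derivative of v_b. In particular v_b is an extremal function for the one-dimensional Bliss inequality. -/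
/-
The substitution `u = b t^{p/(p-1)}` turns both integrals into Beta integrals
`∫₀^∞ u^{α-1} (1+u)^{-(α+β)} du = B(α, β)`, which is the Beta integral over `(0,1)` after
`x = u/(1+u)`. With `α = N(p-1)/p`, the first integral is a multiple of `B(α, N/p)` and the second
one of `B(α+1, N/p-1) = α/(N/p-1) · B(α, N/p)`, while `Eucl N p` is expressed through the same
`B(α, N/p)`. The remaining identity between products of powers is checked on logarithms.
-/

open MeasureTheory

/-- The volume of the unit ball in dimension `N` (for real `N > 0`):
`ω_N = π^{N/2} / Γ(N/2 + 1)`. -/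
noncomputable def omegaN (N : ℝ) : ℝ := Real.pi ^ (N / 2) / Real.Gamma (N / 2 + 1)

/-- The sharp Euclidean Sobolev constant `Eucl(N,p)`. -/
noncomputable def Eucl (N p : ℝ) : ℝ :=
  (1 / N) * (N * (p - 1) / (N - p)) ^ ((p - 1) / p) *
    (Real.Gamma (N + 1) /
      (N * omegaN N * Real.Gamma (N / p) * Real.Gamma (N + 1 - N / p))) ^ (1 / N)

open Set Real ProbabilityTheory

theorem lintegral_Ioo_rpow_mul_one_sub_rpow {α β : ℝ} (hα : 0 < α) (hβ : 0 < β) :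
    ∫⁻ x in Ioo 0 1, ENNReal.ofReal (x ^ (α - 1) * (1 - x) ^ (β - 1)) =
      ENNReal.ofReal (beta α β) := by
  have hB := beta_pos hα hβ
  have h := lintegral_betaPDF_eq_one hα hβ
  rw [lintegral_betaPDF] at h
  simp_rw [mul_assoc, ENNReal.ofReal_mul (one_div_pos.2 hB).le] at h
  rw [lintegral_const_mul' _ _ ENNReal.ofReal_ne_top, ENNReal.ofReal_div_of_pos hB,
    ENNReal.ofReal_one, one_div, ← ENNReal.div_eq_inv_mul, ENNReal.div_eq_one_iff
      (by simpa using hB) ENNReal.ofReal_ne_top] at h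
  exact h

theorem image_div_one_add_Ioi : (fun u : ℝ ↦ u / (1 + u)) '' Ioi 0 = Ioo 0 1 := by
  ext x
  constructor
  · rintro ⟨u, hu, rfl⟩
    have hu : 0 < u := hu
    exact ⟨by positivity, (div_lt_one (by positivity)).2 (by linarith)⟩
  · rintro ⟨hx0, hx1⟩
    refine ⟨x / (1 - x), div_pos hx0 (by linarith), ?_⟩
    have : 1 - x ≠ 0 := by linarith
    field_simp
    ring

theorem injOn_div_one_add_Ioi : InjOn (fun u : ℝ ↦ u / (1 + u)) (Ioi 0) := by
  intro u hu v hv h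
  have hu : 0 < u := hu
  have hv : 0 < v := hv
  field_simp at h
  linarith

theorem lintegral_Ioi_rpow_mul_one_add_rpow_neg {α β : ℝ} (hα : 0 < α) (hβ : 0 < β) :
    ∫⁻ u in Ioi 0, ENNReal.ofReal (u ^ (α - 1) * (1 + u) ^ (-(α + β))) =
      ENNReal.ofReal (beta α β) := by
  have hderiv : ∀ u ∈ Ioi (0 : ℝ),
      HasDerivWithinAt (fun u : ℝ ↦ u / (1 + u)) ((1 + u) ^ (-2 : ℝ)) (Ioi 0) u := by
    intro u hu
    have hu : 0 < u := hu
    have h1 : (1 + u) ≠ 0 := by positivity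
    refine ((hasDerivAt_id u).div ((hasDerivAt_id u).const_add 1) h1).hasDerivWithinAt
      |>.congr_deriv ?_
    rw [rpow_neg (by positivity), rpow_two]
    simp only [id]
    field_simp
    ring
  rw [← lintegral_Ioo_rpow_mul_one_sub_rpow hα hβ, ← image_div_one_add_Ioi,
    lintegral_image_eq_lintegral_abs_deriv_mul measurableSet_Ioi hderiv injOn_div_one_add_Ioi]
  refine setLIntegral_congr_fun measurableSet_Ioi fun u (hu : 0 < u) ↦ ?_
  have h1 : 0 < 1 + u := by positivity
  have hsub : 1 - u / (1 + u) = (1 + u)⁻¹ := by field_simp; ring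
  rw [← ENNReal.ofReal_mul (abs_nonneg _), abs_of_pos (by positivity), hsub,
    div_rpow hu.le h1.le, inv_rpow h1.le, ← rpow_neg h1.le, div_eq_mul_inv, ← rpow_neg h1.le]
  congr 1
  have hsplit : (1 + u) ^ (-(α + β)) =
      (1 + u) ^ (-2 : ℝ) * (1 + u) ^ (-(α - 1)) * (1 + u) ^ (-(β - 1)) := by
    rw [← rpow_add h1, ← rpow_add h1]; ring_nf
  rw [hsplit]
  ring

theorem image_const_mul_rpow_Ioi {b q : ℝ} (hb : 0 < b) (hq : q ≠ 0) :
    (fun t : ℝ ↦ b * t ^ q) '' Ioi 0 = Ioi 0 := by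
  ext u
  constructor
  · rintro ⟨t, ht, rfl⟩
    have ht : 0 < t := ht
    exact mul_pos hb (rpow_pos_of_pos ht q)
  · intro (hu : 0 < u)
    refine ⟨(u / b) ^ q⁻¹, rpow_pos_of_pos (div_pos hu hb) _, ?_⟩
    simp only
    rw [← rpow_mul (div_pos hu hb).le, inv_mul_cancel₀ hq, rpow_one]
    field_simp

theorem injOn_const_mul_rpow_Ioi {b q : ℝ} (hb : 0 < b) (hq : q ≠ 0) :
    InjOn (fun t : ℝ ↦ b * t ^ q) (Ioi 0) := fun _ hs _ ht h ↦
  rpow_left_injOn hq (mem_Ioi.1 hs).le (mem_Ioi.1 ht).le (mul_left_cancel₀ hb.ne' h)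

theorem lintegral_Ioi_rpow_mul_one_add_mul_rpow_neg {a q b c : ℝ} (ha : 0 < a) (hq : 0 < q)
    (hb : 0 < b) (hc : a / q < c) :
    ∫⁻ t in Ioi 0, ENNReal.ofReal (t ^ (a - 1) * (1 + b * t ^ q) ^ (-c)) =
      ENNReal.ofReal (b ^ (-(a / q)) / q * beta (a / q) (c - a / q)) := by
  have hderiv : ∀ t ∈ Ioi (0 : ℝ),
      HasDerivWithinAt (fun t : ℝ ↦ b * t ^ q) (b * (q * t ^ (q - 1))) (Ioi 0) t :=
    fun t (ht : 0 < t) ↦ ((hasDerivAt_rpow_const (Or.inl ht.ne')).const_mul b).hasDerivWithinAt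
  have hsubst := lintegral_Ioi_rpow_mul_one_add_rpow_neg (div_pos ha hq) (sub_pos.2 hc)
  rw [add_sub_cancel, ← image_const_mul_rpow_Ioi hb hq.ne',
    lintegral_image_eq_lintegral_abs_deriv_mul measurableSet_Ioi hderiv
      (injOn_const_mul_rpow_Ioi hb hq.ne')] at hsubst
  have hjac : ∀ t ∈ Ioi (0 : ℝ), ENNReal.ofReal |b * (q * t ^ (q - 1))| *
      ENNReal.ofReal ((b * t ^ q) ^ (a / q - 1) * (1 + b * t ^ q) ^ (-c)) =
      ENNReal.ofReal (q * b ^ (a / q)) *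
        ENNReal.ofReal (t ^ (a - 1) * (1 + b * t ^ q) ^ (-c)) := by
    intro t (ht : 0 < t)
    rw [← ENNReal.ofReal_mul (abs_nonneg _), ← ENNReal.ofReal_mul (by positivity),
      abs_of_pos (by positivity), mul_rpow hb.le (rpow_nonneg ht.le _), ← rpow_mul ht.le]
    have hb' : b * b ^ (a / q - 1) = b ^ (a / q) := by
      rw [mul_comm, ← rpow_add_one hb.ne', sub_add_cancel]
    have ht' : t ^ (q - 1) * t ^ (q * (a / q - 1)) = t ^ (a - 1) := by
      rw [← rpow_add ht]; congr 1; field_simp; ring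
    congr 1
    calc b * (q * t ^ (q - 1)) *
          (b ^ (a / q - 1) * t ^ (q * (a / q - 1)) * (1 + b * t ^ q) ^ (-c))
        = q * (b * b ^ (a / q - 1)) * ((t ^ (q - 1) * t ^ (q * (a / q - 1))) *
            (1 + b * t ^ q) ^ (-c)) := by ring
      _ = _ := by rw [hb', ht']
  rw [setLIntegral_congr_fun measurableSet_Ioi hjac,
    lintegral_const_mul' _ _ ENNReal.ofReal_ne_top] at hsubst
  have hqb : 0 < q * b ^ (a / q) := by positivity
  rw [← ENNReal.eq_div_iff (by simpa using hqb) ENNReal.ofReal_ne_top] at hsubst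
  rw [hsubst, ← ENNReal.ofReal_div_of_pos hqb, rpow_neg hb.le]
  congr 1
  field_simp

theorem ProbabilityTheory.beta_add_one_sub_one {x y : ℝ} (hx : x ≠ 0) (hy : y - 1 ≠ 0) :
    beta (x + 1) (y - 1) = x / (y - 1) * beta x y := by
  have hΓ : Gamma y = (y - 1) * Gamma (y - 1) := by
    simpa using Gamma_add_one hy
  rw [beta, beta, Gamma_add_one hx, hΓ, show x + 1 + (y - 1) = x + y by ring]
  field_simp

theorem omegaN_pos {N : ℝ} (hN : 0 < N) : 0 < omegaN N :=
  div_pos (rpow_pos_of_pos pi_pos _) (Gamma_pos_of_pos (by positivity))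

theorem Eucl_eq_beta {N p : ℝ} (hp : 1 < p) (hpN : p < N) :
    Eucl N p = 1 / N * (N * (p - 1) / (N - p)) ^ ((p - 1) / p) *
      (p / ((p - 1) * N * omegaN N * beta (N * (p - 1) / p) (N / p))) ^ (1 / N) := by
  have hp0 : 0 < p := by linarith
  have hp1 : 0 < p - 1 := by linarith
  have hN0 : 0 < N := by linarith
  have hα : 0 < N * (p - 1) / p := by positivity
  have hN : N + 1 - N / p = N * (p - 1) / p + 1 := by field_simp; ring
  have hsum : N * (p - 1) / p + N / p = N := by field_simp; ring
  rw [Eucl, hN, Gamma_add_one hα.ne', beta, hsum, Gamma_add_one (by linarith)]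
  congr 2
  have : Gamma (N / p) ≠ 0 := by positivity
  have : Gamma (N * (p - 1) / p) ≠ 0 := by positivity
  field_simp

noncomputable def blissProfile (N p b r : ℝ) : ℝ := (1 + b * r ^ (p / (p - 1))) ^ ((p - N) / p)

theorem hasDerivAt_blissProfile {N p b t : ℝ} (hb : 0 ≤ b) (ht : 0 < t) :
    HasDerivAt (blissProfile N p b)
      ((p - N) / p * (1 + b * t ^ (p / (p - 1))) ^ ((p - N) / p - 1) *
        (b * (p / (p - 1) * t ^ (p / (p - 1) - 1)))) t := by
  have hX : 0 < 1 + b * t ^ (p / (p - 1)) := by positivity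
  exact (hasDerivAt_rpow_const (Or.inl hX.ne')).comp t
    (((hasDerivAt_rpow_const (Or.inl ht.ne')).const_mul b).const_add 1)

theorem lintegral_blissProfile_rpow {N p b : ℝ} (hp : 1 < p) (hpN : p < N) (hb : 0 < b) :
    ∫⁻ t in Ioi 0, ENNReal.ofReal (blissProfile N p b t ^ (p * N / (N - p)) * t ^ (N - 1)) =
      ENNReal.ofReal (b ^ (-(N * (p - 1) / p)) * ((p - 1) / p) *
        beta (N * (p - 1) / p) (N / p)) := by
  have hp0 : 0 < p := by linarith
  have hp1 : 0 < p - 1 := by linarith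
  have hNp : 0 < N - p := by linarith
  have hq : N / (p / (p - 1)) = N * (p - 1) / p := by field_simp
  have h := lintegral_Ioi_rpow_mul_one_add_mul_rpow_neg (a := N) (q := p / (p - 1)) (c := N)
    (by linarith) (by positivity) hb (by rw [hq, div_lt_iff₀ hp0]; nlinarith)
  rw [hq, show N - N * (p - 1) / p = N / p by field_simp; ring, div_div_eq_mul_div,
    mul_div_assoc] at h
  rw [← h]
  refine setLIntegral_congr_fun measurableSet_Ioi fun t (ht : 0 < t) ↦ ?_
  have hX : 0 < 1 + b * t ^ (p / (p - 1)) := by positivity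
  rw [blissProfile, ← rpow_mul hX.le, mul_comm]
  congr 3
  field_simp
  ring

theorem lintegral_abs_deriv_blissProfile_rpow {N p b : ℝ} (hp : 1 < p) (hpN : p < N)
    (hb : 0 < b) :
    ∫⁻ t in Ioi 0, ENNReal.ofReal (|deriv (blissProfile N p b) t| ^ p * t ^ (N - 1)) =
      ENNReal.ofReal (((N - p) / (p - 1) * b) ^ p * (b ^ (-(N * (p - 1) / p + 1)) *
        ((p - 1) / p) * beta (N * (p - 1) / p + 1) (N / p - 1))) := by
  have hp0 : 0 < p := by linarith
  have hp1 : 0 < p - 1 := by linarith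
  have hNp : 0 < N - p := by linarith
  set q := p / (p - 1) with hq_def
  have hq : 0 < q := by positivity
  have hα : (N + q) / q = N * (p - 1) / p + 1 := by rw [hq_def]; field_simp
  have h := lintegral_Ioi_rpow_mul_one_add_mul_rpow_neg (a := N + q) (q := q) (c := N)
    (by linarith) hq hb (by rw [hα, ← sub_pos]; field_simp; linarith)
  rw [hα, show N - (N * (p - 1) / p + 1) = N / p - 1 by field_simp; ring, div_div_eq_mul_div,
    mul_div_assoc] at h
  have hw : 0 < (N - p) / (p - 1) * b := by positivity
  rw [ENNReal.ofReal_mul (by positivity), ← h, ← lintegral_const_mul' _ _ ENNReal.ofReal_ne_top]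
  refine setLIntegral_congr_fun measurableSet_Ioi fun t (ht : 0 < t) ↦ ?_
  set X := 1 + b * t ^ q
  have hX : 0 < X := by positivity
  rw [← ENNReal.ofReal_mul (by positivity), ((hasDerivAt_blissProfile hb.le ht).deriv)]
  congr 1
  have habs : |(p - N) / p * X ^ ((p - N) / p - 1) * (b * (q * t ^ (q - 1)))| =
      (N - p) / (p - 1) * b * (X ^ ((p - N) / p - 1) * t ^ (q - 1)) := by
    have hneg : (p - N) / p < 0 := div_neg_of_neg_of_pos (by linarith) hp0
    rw [abs_of_neg (mul_neg_of_neg_of_pos (mul_neg_of_neg_of_pos hneg (by positivity))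
      (by positivity)), hq_def]
    field_simp
    ring
  have hXexp : ((p - N) / p - 1) * p = -N := by field_simp; ring
  have htexp : (q - 1) * p = q := by rw [hq_def]; field_simp; ring
  rw [habs, mul_rpow hw.le (by positivity), mul_rpow (rpow_nonneg hX.le _) (rpow_nonneg ht.le _),
    ← rpow_mul hX.le, ← rpow_mul ht.le, hXexp, htexp,
    show N + q - 1 = q + (N - 1) by ring, rpow_add ht]
  ring

theorem bliss_constant_identity {N p b : ℝ} (hp : 1 < p) (hpN : p < N) (hb : 0 < b) :
    (N * omegaN N * (b ^ (-(N * (p - 1) / p)) * ((p - 1) / p) *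
        beta (N * (p - 1) / p) (N / p))) ^ ((N - p) / (p * N)) =
      Eucl N p * (N * omegaN N * (((N - p) / (p - 1) * b) ^ p * (b ^ (-(N * (p - 1) / p + 1)) *
        ((p - 1) / p) * beta (N * (p - 1) / p + 1) (N / p - 1)))) ^ (1 / p) := by
  have hp0 : 0 < p := by linarith
  have hp1 : 0 < p - 1 := by linarith
  have hN0 : 0 < N := by linarith
  have hNp : 0 < N - p := by linarith
  have hσ : 0 < omegaN N := omegaN_pos hN0
  have hy : N / p - 1 = (N - p) / p := by field_simp
  rw [beta_add_one_sub_one (by positivity) (by rw [hy]; positivity), hy, Eucl_eq_beta hp hpN]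
  have hB : 0 < beta (N * (p - 1) / p) (N / p) := beta_pos (by positivity) (by positivity)
  apply Real.log_injOn_pos (mem_Ioi.2 (by positivity)) (mem_Ioi.2 (by positivity))
  simp (disch := positivity) only [log_mul, log_div, log_rpow, log_inv, one_div]
  field_simp
  ring

theorem bliss_extremal_general (N p b : ℝ) (hp1 : 1 < p) (hpN : p < N) (hb : 0 < b)
    (v v' : ℝ → ℝ)
    (hv : ∀ r : ℝ, v r = (1 + b * r ^ (p / (p - 1))) ^ ((p - N) / p))
    (hv' : ∀ r : ℝ, 0 < r → HasDerivAt v (v' r) r) :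
    (∫⁻ t in Set.Ioi (0 : ℝ),
        ENNReal.ofReal (v t ^ (p * N / (N - p)) * t ^ (N - 1))) ≠ ⊤ ∧
    (∫⁻ t in Set.Ioi (0 : ℝ), ENNReal.ofReal (|v' t| ^ p * t ^ (N - 1))) ≠ ⊤ ∧
    (ENNReal.ofReal (N * omegaN N) *
        ∫⁻ t in Set.Ioi (0 : ℝ),
          ENNReal.ofReal (v t ^ (p * N / (N - p)) * t ^ (N - 1))) ^ ((N - p) / (p * N)) =
      ENNReal.ofReal (Eucl N p) *
        (ENNReal.ofReal (N * omegaN N) *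
            ∫⁻ t in Set.Ioi (0 : ℝ),
              ENNReal.ofReal (|v' t| ^ p * t ^ (N - 1))) ^ (1 / p) := by
  obtain rfl : v = blissProfile N p b := funext hv
  have hI₂ : ∫⁻ t in Ioi 0, ENNReal.ofReal (|v' t| ^ p * t ^ (N - 1)) =
      ∫⁻ t in Ioi 0, ENNReal.ofReal (|deriv (blissProfile N p b) t| ^ p * t ^ (N - 1)) :=
    setLIntegral_congr_fun measurableSet_Ioi fun t ht ↦ by rw [(hv' t ht).deriv]
  have hp0 : 0 < p := by linarith
  have hN0 : 0 < N := by linarith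
  have hσ : 0 < omegaN N := omegaN_pos hN0
  have hp1' : 0 < p - 1 := by linarith
  have hNp : 0 < N - p := by linarith
  rw [hI₂, lintegral_blissProfile_rpow hp1 hpN hb,
    lintegral_abs_deriv_blissProfile_rpow hp1 hpN hb]
  have hB₁ : 0 < beta (N * (p - 1) / p) (N / p) := beta_pos (by positivity) (by positivity)
  have hB₂ : 0 < beta (N * (p - 1) / p + 1) (N / p - 1) :=
    beta_pos (by positivity) (by rw [sub_pos, one_lt_div hp0]; exact hpN)
  refine ⟨ENNReal.ofReal_ne_top, ENNReal.ofReal_ne_top, ?_⟩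
  rw [← ENNReal.ofReal_mul (by positivity), ← ENNReal.ofReal_mul (by positivity),
    ENNReal.ofReal_rpow_of_pos (by positivity), ENNReal.ofReal_rpow_of_pos (by positivity),
    ← ENNReal.ofReal_mul' (by positivity), bliss_constant_identity hp1 hpN hb]

/-- The functions `v_b(r) = (1 + b r^{p/(p-1)})^{(p-N)/p}`, `b > 0`, are extremal for the
one-dimensional Bliss inequality: both sides are finite and equality holds, where `v'` is the
(everywhere defined on `(0,∞)`) derivative of `v_b`. -/
theorem bliss_extremal (N p b : ℝ) (hN : 1 < N) (hp1 : 1 < p) (hpN : p < N) (hb : 0 < b)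
    (v v' : ℝ → ℝ)
    (hv : ∀ r : ℝ, v r = (1 + b * r ^ (p / (p - 1))) ^ ((p - N) / p))
    (hv' : ∀ r : ℝ, 0 < r → HasDerivAt v (v' r) r) :
    (∫⁻ t in Set.Ioi (0 : ℝ),
        ENNReal.ofReal (v t ^ (p * N / (N - p)) * t ^ (N - 1))) ≠ ⊤ ∧
    (∫⁻ t in Set.Ioi (0 : ℝ), ENNReal.ofReal (|v' t| ^ p * t ^ (N - 1))) ≠ ⊤ ∧
    (ENNReal.ofReal (N * omegaN N) *
        ∫⁻ t in Set.Ioi (0 : ℝ),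
          ENNReal.ofReal (v t ^ (p * N / (N - p)) * t ^ (N - 1))) ^ ((N - p) / (p * N)) =
      ENNReal.ofReal (Eucl N p) *
        (ENNReal.ofReal (N * omegaN N) *
            ∫⁻ t in Set.Ioi (0 : ℝ),
              ENNReal.ofReal (|v' t| ^ p * t ^ (N - 1))) ^ (1 / p) :=
  bliss_extremal_general N p b hp1 hpN hb v v' hv hv'
end

section
/- For every real q > 2 there exists a constant C_q ≥ 0 such that for all t ∈ ℝ: | |1+t|^q − 1 − q·t − (q(q−1)/2)·t² | ≤ C_q · ( |t|^{min(3,q)} + |t|^q ). -/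
/-!
Near `t = 0` the function `(1 + t) ^ q` is smooth, its third derivative is bounded on
`[-1/2, 1/2]`, and the expression is its second-order Taylor remainder at `0`; three applications
of the mean value inequality bound it by `M |t| ^ 3 ≤ M |t| ^ min 3 q`. For `|t| ≥ 1/2` each of the
four terms is at most a constant times `|t| ^ q`, since `q ≥ 2`.
-/

open Set

lemma abs_le_mul_pow_succ_of_abs_deriv_le {f f' : ℝ → ℝ} {D : Set ℝ} {K : ℝ} {n : ℕ}
    (hD : D.OrdConnected) (h0 : 0 ∈ D) (hf0 : f 0 = 0) (hK : 0 ≤ K)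
    (hf : ∀ s ∈ D, HasDerivAt f (f' s) s) (hf' : ∀ s ∈ D, |f' s| ≤ K * |s| ^ n) :
    ∀ s ∈ D, |f s| ≤ K * |s| ^ (n + 1) := by
  intro s hs
  have hsub : uIcc 0 s ⊆ D := hD.uIcc_subset h0 hs
  have hbound : ∀ u ∈ uIcc 0 s, ‖f' u‖ ≤ K * |s| ^ n := fun u hu => by
    have hus : |u| ≤ |s| := by simpa using abs_sub_left_of_mem_uIcc hu
    calc ‖f' u‖ = |f' u| := Real.norm_eq_abs _
      _ ≤ K * |u| ^ n := hf' u (hsub hu)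
      _ ≤ K * |s| ^ n := by gcongr
  have hmvt := (convex_uIcc 0 s).norm_image_sub_le_of_norm_hasDerivWithin_le
    (fun u hu => (hf u (hsub hu)).hasDerivWithinAt) hbound left_mem_uIcc right_mem_uIcc
  simpa [hf0, pow_succ, mul_assoc] using hmvt

lemma hasDerivAt_one_add_rpow (p : ℝ) {s : ℝ} (hs : 0 < 1 + s) :
    HasDerivAt (fun x : ℝ => (1 + x) ^ p) (p * (1 + s) ^ (p - 1)) s := by
  simpa using ((hasDerivAt_id s).const_add 1).rpow_const (p := p) (Or.inl hs.ne')

lemma exists_abs_rpow_taylor_two_le_mul_cube (q : ℝ) :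
    ∃ M, 0 ≤ M ∧ ∀ t : ℝ, |t| ≤ 1 / 2 →
      |(|1 + t| ^ q - 1 - q * t - q * (q - 1) / 2 * t ^ 2)| ≤ M * |t| ^ 3 := by
  set D : Set ℝ := Icc (-(1 / 2)) (1 / 2)
  have h0 : (0 : ℝ) ∈ D := by norm_num [D]
  have hpos : ∀ s ∈ D, 0 < 1 + s := fun s hs => by linarith [hs.1]
  obtain ⟨M, hM⟩ : ∃ M, ∀ s ∈ D, ‖q * (q - 1) * (q - 2) * (1 + s) ^ (q - 3)‖ ≤ M :=
    isCompact_Icc.exists_bound_of_continuousOn <| continuousOn_const.mul <|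
      (continuousOn_const.add continuousOn_id).rpow_const fun s hs => Or.inl (hpos s hs).ne'
  have hM0 : 0 ≤ M := (norm_nonneg _).trans (hM 0 h0)
  have hd3 : ∀ s ∈ D, HasDerivAt (fun x => q * (q - 1) * ((1 + x) ^ (q - 2) - 1))
      (q * (q - 1) * (q - 2) * (1 + s) ^ (q - 3)) s := fun s hs =>
    (((hasDerivAt_one_add_rpow (q - 2) (hpos s hs)).sub_const 1).const_mul
      (q * (q - 1))).congr_deriv (by ring_nf)
  have hd2 : ∀ s ∈ D, HasDerivAt (fun x => q * ((1 + x) ^ (q - 1) - 1) - q * (q - 1) * x)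
      (q * (q - 1) * ((1 + s) ^ (q - 2) - 1)) s := fun s hs =>
    ((((hasDerivAt_one_add_rpow (q - 1) (hpos s hs)).sub_const 1).const_mul q).sub
      ((hasDerivAt_id s).const_mul (q * (q - 1)))).congr_deriv (by ring_nf)
  have hd1 : ∀ s ∈ D, HasDerivAt (fun x => (1 + x) ^ q - 1 - q * x - q * (q - 1) / 2 * x ^ 2)
      (q * ((1 + s) ^ (q - 1) - 1) - q * (q - 1) * s) s := fun s hs =>
    ((((hasDerivAt_one_add_rpow q (hpos s hs)).sub_const 1).sub
      ((hasDerivAt_id s).const_mul q)).sub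
        ((hasDerivAt_pow 2 s).const_mul (q * (q - 1) / 2))).congr_deriv (by norm_num; ring)
  have hb2 := abs_le_mul_pow_succ_of_abs_deriv_le (n := 0) ordConnected_Icc h0 (by simp) hM0 hd3
    fun s hs => by simpa using hM s hs
  have hb1 := abs_le_mul_pow_succ_of_abs_deriv_le ordConnected_Icc h0 (by simp) hM0 hd2 hb2
  have hb0 := abs_le_mul_pow_succ_of_abs_deriv_le ordConnected_Icc h0 (by simp) hM0 hd1 hb1
  refine ⟨M, hM0, fun t ht => ?_⟩
  have htD : t ∈ D := abs_le.mp ht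
  rw [abs_of_pos (hpos t htD)]
  exact hb0 t htD

lemma exists_abs_rpow_taylor_two_le_mul_rpow {q : ℝ} (hq : 2 ≤ q) :
    ∃ B, 0 ≤ B ∧ ∀ t : ℝ, 1 / 2 ≤ |t| →
      |(|1 + t| ^ q - 1 - q * t - q * (q - 1) / 2 * t ^ 2)| ≤ B * |t| ^ q := by
  have hq0 : 0 ≤ q := by linarith
  have hc : 0 ≤ q * (q - 1) / 2 := by nlinarith
  refine ⟨((2 : ℝ) ^ q + 1 + q + q * (q - 1) / 2) * 2 ^ q, by positivity, fun t ht => ?_⟩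
  set x := 2 * |t|
  have hx : 1 ≤ x := by linarith
  have hle : ∀ k : ℕ, (k : ℝ) ≤ q → x ^ k ≤ x ^ q := fun k hk => by
    rw [← Real.rpow_natCast]
    exact Real.rpow_le_rpow_of_exponent_le hx hk
  have e0 : 1 ≤ x ^ q := by simpa using hle 0 (by push_cast; linarith)
  have e1 : |t| ≤ x ^ q := calc
    |t| ≤ x := by linarith [abs_nonneg t]
    _ ≤ x ^ q := by simpa using hle 1 (by push_cast; linarith)
  have e2 : t ^ 2 ≤ x ^ q := calc
    t ^ 2 = |t| ^ 2 := (sq_abs t).symm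
    _ ≤ x ^ 2 := by gcongr; linarith [abs_nonneg t]
    _ ≤ x ^ q := hle 2 (by push_cast; linarith)
  have e3 : |1 + t| ^ q ≤ 2 ^ q * x ^ q := by
    rw [← Real.mul_rpow zero_le_two (by positivity)]
    gcongr
    have := abs_add_le (1 : ℝ) t
    rw [abs_one] at this
    linarith
  have hxq : x ^ q = 2 ^ q * |t| ^ q := Real.mul_rpow zero_le_two (abs_nonneg t)
  have hqt : |q * t| ≤ q * x ^ q := by
    rw [abs_mul, abs_of_nonneg hq0]
    exact mul_le_mul_of_nonneg_left e1 hq0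
  have hct : q * (q - 1) / 2 * t ^ 2 ≤ q * (q - 1) / 2 * x ^ q := mul_le_mul_of_nonneg_left e2 hc
  have hsq : 0 ≤ q * (q - 1) / 2 * t ^ 2 := by positivity
  have hpow : 0 ≤ |1 + t| ^ q := by positivity
  rw [mul_assoc, ← hxq, abs_le]
  constructor <;> linarith [abs_le.mp hqt]

/-- For every real `q > 2` there is `C_q ≥ 0` such that for all `t ∈ ℝ`,
`| |1+t|^q − 1 − q·t − (q(q−1)/2)·t² | ≤ C_q (|t|^{min(3,q)} + |t|^q)`. -/
theorem abs_rpow_taylor_two (q : ℝ) (hq : 2 < q) :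
    ∃ C : ℝ, 0 ≤ C ∧ ∀ t : ℝ,
      abs (|1 + t| ^ q - 1 - q * t - q * (q - 1) / 2 * t ^ 2) ≤
        C * (|t| ^ min 3 q + |t| ^ q) := by
  obtain ⟨M, hM, hsmall⟩ := exists_abs_rpow_taylor_two_le_mul_cube q
  obtain ⟨B, hB, hlarge⟩ := exists_abs_rpow_taylor_two_le_mul_rpow hq.le
  refine ⟨M + B, add_nonneg hM hB, fun t => ?_⟩
  have hmin : 0 ≤ |t| ^ min 3 q := by positivity
  have hpow : 0 ≤ |t| ^ q := by positivity
  rcases le_or_gt |t| (1 / 2) with ht | ht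
  · have hcube : |t| ^ 3 ≤ |t| ^ min 3 q := by
      rw [← Real.rpow_natCast]
      exact Real.rpow_le_rpow_of_exponent_ge' (abs_nonneg t) (by linarith)
        (le_min (by norm_num) (by linarith)) (by norm_num)
    calc _ ≤ M * |t| ^ 3 := hsmall t ht
      _ ≤ (M + B) * (|t| ^ min 3 q + |t| ^ q) := by nlinarith
  · calc _ ≤ B * |t| ^ q := hlarge t ht.le
      _ ≤ (M + B) * (|t| ^ min 3 q + |t| ^ q) := by nlinarith
end

section
/- For every real p > 1 there exists a constant C_p ≥ 0 such that for all a, b ∈ ℝ: | |a + |b||^p − |b|^p − p·a·|b|^{p−1} | ≤ C_p · ( |a|^{min(p,2)} · |b|^{p − min(p,2)} + |a|^p ). -/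
/-!
Writing `a = |b| x` for `b ≠ 0`, both sides are `|b|^p` times their values at `(x, 1)`, so it
suffices to bound `φ(x) = |1 + x|^p - 1 - p x`. For `|x| ≤ 1/2`, `φ` is the first-order Taylor
remainder of `(1 + x)^p`, hence `O(x²)` by the mean value theorem applied twice, and
`x² ≤ |x|^min(p,2)`. For `|x| ≥ 1/2` every term of `φ` is `O(|x|^p)`. For `b = 0` the
claim is `|a|^p ≤ C (… + |a|^p)`, which holds once `C ≥ 1`.
-/

open Real Set

theorem rpow_le_rpow_add_rpow_of_mem_Icc {c d x : ℝ} (hc : 0 < c) (hx : x ∈ Icc c d) (s : ℝ) :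
    x ^ s ≤ c ^ s + d ^ s := by
  have hx0 : 0 < x := hc.trans_le hx.1
  rcases le_total s 0 with hs | hs
  · linarith [rpow_le_rpow_of_nonpos hc hx.1 hs, rpow_nonneg (hx0.le.trans hx.2) s]
  · linarith [rpow_le_rpow hx0.le hx.2 hs, rpow_nonneg hc.le s]

theorem abs_rpow_sub_rpow_le_of_mem_Icc {c d x y : ℝ} (hc : 0 < c) (hx : x ∈ Icc c d)
    (hy : y ∈ Icc c d) (s : ℝ) :
    |x ^ s - y ^ s| ≤ |s| * (c ^ (s - 1) + d ^ (s - 1)) * |x - y| := by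
  have hderiv : ∀ z ∈ Icc c d, HasDerivWithinAt (· ^ s) (s * z ^ (s - 1)) (Icc c d) z :=
    fun z hz => (hasDerivAt_rpow_const (.inl (hc.trans_le hz.1).ne')).hasDerivWithinAt
  have hbound : ∀ z ∈ Icc c d, ‖s * z ^ (s - 1)‖ ≤ |s| * (c ^ (s - 1) + d ^ (s - 1)) := by
    intro z hz
    rw [norm_mul, norm_eq_abs, norm_eq_abs, abs_of_nonneg (rpow_nonneg (hc.le.trans hz.1) _)]
    exact mul_le_mul_of_nonneg_left (rpow_le_rpow_add_rpow_of_mem_Icc hc hz _) (abs_nonneg s)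
  simpa only [norm_eq_abs] using
    (convex_Icc c d).norm_image_sub_le_of_norm_hasDerivWithin_le hderiv hbound hy hx

theorem abs_one_add_rpow_sub_le_sq {p x : ℝ} (hx : |x| ≤ 1 / 2) :
    |(1 + x) ^ p - 1 - p * x| ≤
      |p| * (|p - 1| * ((1 / 2) ^ (p - 2) + (3 / 2) ^ (p - 2))) * x ^ 2 := by
  set M := |p - 1| * ((1 / 2 : ℝ) ^ (p - 2) + (3 / 2) ^ (p - 2))
  set I := Icc (-|x|) |x|
  have hmem : ∀ u ∈ I, 1 + u ∈ Icc (1 / 2 : ℝ) (3 / 2) := fun u hu =>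
    ⟨by linarith [hu.1], by linarith [hu.2]⟩
  have hderiv : ∀ u ∈ I, HasDerivWithinAt (fun u => (1 + u) ^ p - p * u)
      (p * ((1 + u) ^ (p - 1) - 1)) I u := by
    intro u hu
    have hpos : 1 + u ≠ 0 := by linarith [(hmem u hu).1]
    have h : HasDerivAt (fun u => (1 + u) ^ p - p * u) (1 * p * (1 + u) ^ (p - 1) - p * 1) u :=
      (((hasDerivAt_id' u).const_add 1).rpow_const (.inl hpos)).sub ((hasDerivAt_id' u).const_mul p)
    exact h.hasDerivWithinAt.congr_deriv (by ring)
  have hbound : ∀ u ∈ I, ‖p * ((1 + u) ^ (p - 1) - 1)‖ ≤ |p| * M * |x| := by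
    intro u hu
    have hone : (1 : ℝ) ∈ Icc (1 / 2 : ℝ) (3 / 2) := by norm_num
    have h := abs_rpow_sub_rpow_le_of_mem_Icc (by norm_num) (hmem u hu) hone (p - 1)
    rw [show p - 1 - 1 = p - 2 by ring, add_sub_cancel_left, one_rpow] at h
    rw [norm_mul, norm_eq_abs, norm_eq_abs, mul_assoc]
    refine mul_le_mul_of_nonneg_left (h.trans ?_) (abs_nonneg p)
    exact mul_le_mul_of_nonneg_left (abs_le.mpr hu) (by positivity)
  have hmvt := (convex_Icc _ _).norm_image_sub_le_of_norm_hasDerivWithin_le hderiv hbound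
    (⟨by simp, abs_nonneg x⟩ : (0 : ℝ) ∈ I) (⟨neg_abs_le x, le_abs_self x⟩ : x ∈ I)
  simp only [norm_eq_abs, add_zero, mul_zero, sub_zero, one_rpow] at hmvt
  calc |(1 + x) ^ p - 1 - p * x| = |(1 + x) ^ p - p * x - 1| := by ring_nf
    _ ≤ |p| * M * |x| * |x| := hmvt
    _ = |p| * M * x ^ 2 := by rw [mul_assoc, abs_mul_abs_self, sq]

theorem abs_abs_one_add_rpow_sub_le_rpow {p x : ℝ} (hp : 1 ≤ p) (hx : 1 / 2 ≤ |x|) :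
    |(|1 + x|) ^ p - 1 - p * x| ≤ (2 + p) * 3 ^ p * |x| ^ p := by
  set y := 3 * |x| with hy
  have hy1 : 1 ≤ y := by linarith
  have hbase : |1 + x| ^ p ≤ y ^ p :=
    rpow_le_rpow (abs_nonneg _) (by linarith [abs_add_le 1 x, abs_one (α := ℝ)]) (by linarith)
  have hone : 1 ≤ y ^ p := one_le_rpow hy1 (by linarith)
  have hlin : |p * x| ≤ p * y ^ p := by
    rw [abs_mul, abs_of_nonneg (by linarith : 0 ≤ p)]
    exact mul_le_mul_of_nonneg_left ((by linarith : |x| ≤ y).trans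
      (self_le_rpow_of_one_le hy1 hp)) (by linarith)
  rw [mul_assoc, ← mul_rpow (by norm_num) (abs_nonneg x), ← hy]
  have hnonneg : 0 ≤ |1 + x| ^ p := by positivity
  rw [abs_le] at hlin ⊢
  constructor <;> nlinarith

theorem exists_abs_abs_one_add_rpow_sub_le {p : ℝ} (hp : 1 < p) :
    ∃ C, 1 ≤ C ∧ ∀ x : ℝ,
      |(|1 + x|) ^ p - 1 - p * x| ≤ C * (|x| ^ min p 2 + |x| ^ p) := by
  set K := |p| * (|p - 1| * ((1 / 2 : ℝ) ^ (p - 2) + (3 / 2) ^ (p - 2)))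
  have hK : 0 ≤ K := by positivity
  have h3p : 1 ≤ (3 : ℝ) ^ p := one_le_rpow (by norm_num) (by linarith)
  refine ⟨(2 + p) * 3 ^ p + K, by nlinarith, fun x => ?_⟩
  have hA : 0 ≤ (2 + p) * 3 ^ p := by positivity
  have hq : 0 ≤ |x| ^ min p 2 := by positivity
  have hxp : 0 ≤ |x| ^ p := by positivity
  rcases le_total |x| (1 / 2) with hx | hx
  · have hsq : x ^ 2 ≤ |x| ^ min p 2 := by
      rw [← sq_abs, ← rpow_two]
      exact rpow_le_rpow_of_exponent_ge' (abs_nonneg x) (by linarith)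
        (le_min (by linarith) zero_le_two) (min_le_right p 2)
    rw [abs_of_pos (by linarith [neg_abs_le x] : 0 < 1 + x)]
    calc _ ≤ K * x ^ 2 := abs_one_add_rpow_sub_le_sq hx
      _ ≤ K * |x| ^ min p 2 := mul_le_mul_of_nonneg_left hsq hK
      _ ≤ _ := by nlinarith [mul_nonneg hA (add_nonneg hq hxp), mul_nonneg hK hxp]
  · calc _ ≤ (2 + p) * 3 ^ p * |x| ^ p := abs_abs_one_add_rpow_sub_le_rpow hp.le hx
      _ ≤ _ := by nlinarith [mul_nonneg hA hq, mul_nonneg hK (add_nonneg hq hxp)]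

theorem abs_abs_add_rpow_sub_le_of_pos {p q C t : ℝ}
    (hC : ∀ x : ℝ, |(|1 + x|) ^ p - 1 - p * x| ≤ C * (|x| ^ q + |x| ^ p))
    (ht : 0 < t) (a : ℝ) :
    |(|a + t|) ^ p - t ^ p - p * a * t ^ (p - 1)| ≤
      C * (|a| ^ q * t ^ (p - q) + |a| ^ p) := by
  have hpow : ∀ r : ℝ, |a| ^ r = t ^ r * |a / t| ^ r := fun r => by
    rw [abs_div, abs_of_pos ht, div_rpow (abs_nonneg a) ht.le,
      mul_div_cancel₀ _ (rpow_pos_of_pos ht r).ne']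
  have hlhs : |a + t| ^ p - t ^ p - p * a * t ^ (p - 1) =
      t ^ p * (|1 + a / t| ^ p - 1 - p * (a / t)) := by
    rw [show a + t = t * (1 + a / t) by field_simp; ring, abs_mul, abs_of_pos ht,
      mul_rpow ht.le (abs_nonneg _), rpow_sub_one ht.ne']
    field_simp
  have hrhs : |a| ^ q * t ^ (p - q) = t ^ p * |a / t| ^ q := by
    rw [hpow, rpow_sub ht]
    field_simp
  have htp : 0 < t ^ p := rpow_pos_of_pos ht p
  rw [hlhs, hrhs, hpow p, abs_mul, abs_of_pos htp]
  calc _ ≤ t ^ p * (C * (|a / t| ^ q + |a / t| ^ p)) := mul_le_mul_of_nonneg_left (hC _) htp.le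
    _ = _ := by ring

/-- For every real `p > 1` there is `C_p ≥ 0` such that for all `a, b ∈ ℝ`,
`| |a+|b||^p − |b|^p − p·a·|b|^{p−1} | ≤ C_p (|a|^{min(p,2)} |b|^{p−min(p,2)} + |a|^p)`. -/
theorem abs_rpow_taylor_one (p : ℝ) (hp : 1 < p) :
    ∃ C : ℝ, 0 ≤ C ∧ ∀ a b : ℝ,
      abs (abs (a + |b|) ^ p - |b| ^ p - p * a * |b| ^ (p - 1)) ≤
        C * (|a| ^ min p 2 * |b| ^ (p - min p 2) + |a| ^ p) := by
  obtain ⟨C, hC1, hC⟩ := exists_abs_abs_one_add_rpow_sub_le hp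
  refine ⟨C, by linarith, fun a b => ?_⟩
  rcases (abs_nonneg b).eq_or_lt with hb0 | hbpos
  · rw [← hb0, zero_rpow (by linarith), zero_rpow (by linarith), add_zero, mul_zero, sub_zero,
      sub_zero, abs_of_nonneg (by positivity)]
    have hcross : 0 ≤ |a| ^ min p 2 * (0 : ℝ) ^ (p - min p 2) := by positivity
    nlinarith [rpow_nonneg (abs_nonneg a) p]
  · exact abs_abs_add_rpow_sub_le_of_pos hC hbpos a
end

section
/- For every real q > 2 there exists a constant C_q ≥ 0 such that the following holds. Let (X, 𝔪) be a measure space with 𝔪(X) = 1 and let f ∈ L²(𝔪) ∩ L^q(𝔪) satisfy ∫ f d𝔪 = 0. Then | (∫ |1+f|^q d𝔪)^{2/q} − ∫ (1+f)² d𝔪 − (q−2) ∫ f² d𝔪 | ≤ C_q · ( ∫ (|f|^{min(3,q)} + |f|^q) d𝔪 + (∫ |f|^q d𝔪)² + (∫ f² d𝔪)² ). -/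
/-!
Put `c = q (q - 1) / 2`. Taylor's formula for `y ↦ y ^ q` at `1` (third-order remainder for
`|t| ≤ 1/2`, crude bounds otherwise) gives pointwise
`|1 + t| ^ q = 1 + q t + c t² + O(|t| ^ min 3 q + |t| ^ q)`; integrating and using `∫ f = 0`,
`A := ∫ |1 + f| ^ q = 1 + c ∫ f² + E` with `|E| ≲ ∫ (|f| ^ min 3 q + |f| ^ q)`.
Since `A ↦ A ^ (2 / q)` is `1 + (2 / q) (A - 1) + O((A - 1)²)` on `[0, ∞)` and `(2 / q) c = q - 1`,
the quantity to bound is `(2 / q) E + O((A - 1)²)`, and `(A - 1)² ≲ (∫ f²)² + E²` is controlled by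
`(∫ f²)² + (∫ |f| ^ q)²` because `∫ |f| ^ min 3 q ≤ ∫ f² + ∫ |f| ^ q`.
-/

open MeasureTheory Set

theorem abs_sub_le_mul_pow_of_abs_deriv_le {s : Set ℝ} (hs : s.OrdConnected) {g g' : ℝ → ℝ}
    {a K : ℝ} {k : ℕ} (hK : 0 ≤ K) (hg : ∀ y ∈ s, HasDerivAt g (g' y) y)
    (hg' : ∀ y ∈ s, |g' y| ≤ K * |y - a| ^ k) (ha : a ∈ s) {x : ℝ} (hx : x ∈ s) :
    |g x - g a| ≤ K * |x - a| ^ (k + 1) := by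
  have hsub := hs.uIcc_subset ha hx
  have hbound : ∀ y ∈ uIcc a x, ‖g' y‖ ≤ K * |x - a| ^ k := fun y hy =>
    (hg' y (hsub hy)).trans (mul_le_mul_of_nonneg_left
      (pow_le_pow_left₀ (abs_nonneg _) (abs_sub_left_of_mem_uIcc hy) k) hK)
  have := (convex_uIcc a x).norm_image_sub_le_of_norm_hasDerivWithin_le
    (fun y hy => (hg y (hsub hy)).hasDerivWithinAt) hbound left_mem_uIcc right_mem_uIcc
  simpa only [Real.norm_eq_abs, pow_succ, mul_assoc] using this

lemma one_mem_Icc_half_three_halves : (1 : ℝ) ∈ Icc (1 / 2) (3 / 2) := by norm_num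

lemma ne_zero_of_mem_Icc_half_three_halves {y : ℝ} (hy : y ∈ Icc (1 / 2 : ℝ) (3 / 2)) : y ≠ 0 := by
  linarith [hy.1]

theorem exists_abs_rpow_sub_one_le (s : ℝ) :
    ∃ K, 0 ≤ K ∧ ∀ y ∈ Icc (1 / 2 : ℝ) (3 / 2), |y ^ s - 1| ≤ K * |y - 1| := by
  obtain ⟨K, hK⟩ := isCompact_Icc.exists_bound_of_continuousOn (f := fun y : ℝ => s * y ^ (s - 1))
    (continuousOn_const.mul (continuousOn_id.rpow_const fun y hy =>
      Or.inl (ne_zero_of_mem_Icc_half_three_halves hy)))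
  refine ⟨max K 0, le_max_right _ _, fun y hy => ?_⟩
  simpa using abs_sub_le_mul_pow_of_abs_deriv_le (k := 0) ordConnected_Icc (le_max_right K 0)
    (fun y hy => Real.hasDerivAt_rpow_const (Or.inl (ne_zero_of_mem_Icc_half_three_halves hy)))
    (fun y hy => by simpa using (hK y hy).trans (le_max_left K 0))
    one_mem_Icc_half_three_halves hy

theorem exists_abs_rpow_sub_one_sub_mul_le (s : ℝ) :
    ∃ K, 0 ≤ K ∧ ∀ y ∈ Icc (1 / 2 : ℝ) (3 / 2),
      |y ^ s - 1 - s * (y - 1)| ≤ K * |y - 1| ^ 2 := by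
  obtain ⟨K, hK0, hK⟩ := exists_abs_rpow_sub_one_le (s - 1)
  refine ⟨|s| * K, by positivity, fun y hy => ?_⟩
  have := abs_sub_le_mul_pow_of_abs_deriv_le (k := 1) (K := |s| * K) ordConnected_Icc
    (by positivity)
    (g := fun y => y ^ s - s * y) (g' := fun y => s * (y ^ (s - 1) - 1))
    (fun y hy => ((Real.hasDerivAt_rpow_const (p := s)
      (Or.inl (ne_zero_of_mem_Icc_half_three_halves hy))).sub
        ((hasDerivAt_id' y).const_mul s)).congr_deriv (by ring))
    (fun y hy => by
      rw [abs_mul, pow_one, mul_assoc]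
      exact mul_le_mul_of_nonneg_left (hK y hy) (abs_nonneg s))
    one_mem_Icc_half_three_halves hy
  convert this using 2
  simp only [Real.one_rpow]; ring

theorem exists_abs_rpow_sub_taylor_two_le (s : ℝ) :
    ∃ K, 0 ≤ K ∧ ∀ y ∈ Icc (1 / 2 : ℝ) (3 / 2),
      |y ^ s - 1 - s * (y - 1) - s * (s - 1) / 2 * (y - 1) ^ 2| ≤ K * |y - 1| ^ 3 := by
  obtain ⟨K, hK0, hK⟩ := exists_abs_rpow_sub_one_sub_mul_le (s - 1)
  refine ⟨|s| * K, by positivity, fun y hy => ?_⟩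
  have := abs_sub_le_mul_pow_of_abs_deriv_le (k := 2) (K := |s| * K) ordConnected_Icc
    (by positivity)
    (g := fun y => y ^ s - s * y - s * (s - 1) / 2 * (y - 1) ^ 2)
    (g' := fun y => s * (y ^ (s - 1) - 1 - (s - 1) * (y - 1)))
    (fun y hy => (((Real.hasDerivAt_rpow_const (p := s)
      (Or.inl (ne_zero_of_mem_Icc_half_three_halves hy))).sub
        ((hasDerivAt_id' y).const_mul s)).sub
        ((((hasDerivAt_id' y).sub_const 1).pow 2).const_mul (s * (s - 1) / 2))).congr_deriv
          (by push_cast; ring))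
    (fun y hy => by
      rw [abs_mul, mul_assoc]
      exact mul_le_mul_of_nonneg_left (hK y hy) (abs_nonneg s))
    one_mem_Icc_half_three_halves hy
  convert this using 2
  simp only [Real.one_rpow]; ring

theorem Real.rpow_le_rpow_add_rpow {a p r s : ℝ} (ha : 0 ≤ a) (hp : 0 < p) (hpr : p ≤ r)
    (hrs : r ≤ s) : a ^ r ≤ a ^ p + a ^ s := by
  rcases ha.eq_or_lt with rfl | ha
  · simp [Real.zero_rpow (hp.trans_le hpr).ne', Real.zero_rpow hp.ne',
      Real.zero_rpow (hp.trans_le (hpr.trans hrs)).ne']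
  rcases le_total a 1 with ha1 | ha1
  · linarith [Real.rpow_le_rpow_of_exponent_ge ha ha1 hpr, Real.rpow_nonneg ha.le s]
  · linarith [Real.rpow_le_rpow_of_exponent_le ha1 hrs, Real.rpow_nonneg ha.le p]

theorem Real.rpow_le_eight_mul_rpow {a s r : ℝ} (ha : 1 / 2 ≤ a) (hs : 0 ≤ s) (hsr : s ≤ r)
    (hr : r ≤ 3) : a ^ s ≤ 8 * a ^ r := by
  have h2a : 1 ≤ 2 * a := by linarith
  calc a ^ s ≤ (2 * a) ^ s := Real.rpow_le_rpow (by linarith) (by linarith) hs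
    _ ≤ (2 * a) ^ r := Real.rpow_le_rpow_of_exponent_le h2a hsr
    _ = 2 ^ r * a ^ r := Real.mul_rpow zero_le_two (by linarith)
    _ ≤ 2 ^ (3 : ℝ) * a ^ r := by
      gcongr
      norm_num
    _ = 8 * a ^ r := by norm_num

theorem abs_abs_one_add_rpow_sub_taylor_le_of_half_le {q t : ℝ} (hq : 2 < q)
    (ht : 1 / 2 ≤ |t|) :
    |(|1 + t|) ^ q - (1 + q * t + q * (q - 1) / 2 * t ^ 2)| ≤
      (3 ^ q + 8 * (1 + q + q * (q - 1) / 2)) * (|t| ^ min 3 q + |t| ^ q) := by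
  set m := min 3 q
  have hm2 : 2 ≤ m := le_min (by norm_num) hq.le
  have hm3 : m ≤ 3 := min_le_left _ _
  have hc : 0 ≤ q * (q - 1) / 2 := by nlinarith
  have h1 : (1 : ℝ) ≤ 8 * |t| ^ m := by
    simpa using Real.rpow_le_eight_mul_rpow ht le_rfl (by linarith) hm3
  have h2 : |t| ≤ 8 * |t| ^ m := by
    simpa using Real.rpow_le_eight_mul_rpow ht zero_le_one (by linarith) hm3
  have h3 : t ^ 2 ≤ 8 * |t| ^ m := by
    simpa using Real.rpow_le_eight_mul_rpow ht zero_le_two hm2 hm3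
  have h4 : |1 + t| ^ q ≤ 3 ^ q * |t| ^ q := by
    rw [← Real.mul_rpow zero_le_three (abs_nonneg t)]
    exact Real.rpow_le_rpow (abs_nonneg _) (by linarith [abs_add_le 1 t, abs_one (α := ℝ)])
      (by linarith)
  have htriangle : |(|1 + t|) ^ q - (1 + q * t + q * (q - 1) / 2 * t ^ 2)| ≤
      |1 + t| ^ q + 1 + q * |t| + q * (q - 1) / 2 * t ^ 2 := by
    have h0 : 0 ≤ |1 + t| ^ q := Real.rpow_nonneg (abs_nonneg _) q
    have hct : 0 ≤ q * (q - 1) / 2 * t ^ 2 := by positivity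
    have hqt : |q * t| = q * |t| := by rw [abs_mul, abs_of_pos (by linarith)]
    rw [← hqt]
    exact abs_le.2 ⟨by linarith [le_abs_self (q * t)], by linarith [neg_abs_le (q * t)]⟩
  refine htriangle.trans ?_
  nlinarith [mul_le_mul_of_nonneg_left h2 (by linarith : 0 ≤ q), mul_le_mul_of_nonneg_left h3 hc,
    mul_nonneg (by positivity : (0 : ℝ) ≤ 3 ^ q) (Real.rpow_nonneg (abs_nonneg t) m),
    mul_nonneg (by positivity : (0 : ℝ) ≤ 8 * (1 + q + q * (q - 1) / 2))
      (Real.rpow_nonneg (abs_nonneg t) q)]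

theorem exists_abs_abs_one_add_rpow_sub_taylor_le {q : ℝ} (hq : 2 < q) :
    ∃ C, 0 ≤ C ∧ ∀ t : ℝ,
      |(|1 + t|) ^ q - (1 + q * t + q * (q - 1) / 2 * t ^ 2)| ≤ C * (|t| ^ min 3 q + |t| ^ q) := by
  obtain ⟨K, hK0, hK⟩ := exists_abs_rpow_sub_taylor_two_le q
  set C₀ := 3 ^ q + 8 * (1 + q + q * (q - 1) / 2)
  have hC₀ : 0 ≤ C₀ := add_nonneg (by positivity) (by nlinarith)
  refine ⟨K + C₀, by positivity, fun t => ?_⟩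
  have htm : 0 ≤ |t| ^ min 3 q := Real.rpow_nonneg (abs_nonneg t) _
  have htq : 0 ≤ |t| ^ q := Real.rpow_nonneg (abs_nonneg t) q
  rcases le_or_gt |t| (1 / 2) with ht | ht
  · have hy : 1 + t ∈ Icc (1 / 2 : ℝ) (3 / 2) := by
      constructor <;> linarith [abs_le.mp ht]
    have hcube : |t| ^ 3 ≤ |t| ^ min 3 q := by
      rw [← Real.rpow_natCast]
      exact Real.rpow_le_rpow_of_exponent_ge' (abs_nonneg t) (by linarith)
        (le_min zero_le_three (by linarith)) (by simp)
    have hnear := hK (1 + t) hy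
    rw [add_sub_cancel_left] at hnear
    rw [abs_of_nonneg (by linarith [hy.1] : 0 ≤ 1 + t), sub_add_eq_sub_sub, sub_add_eq_sub_sub]
    calc _ ≤ K * |t| ^ 3 := hnear
      _ ≤ K * |t| ^ min 3 q := by gcongr
      _ ≤ _ := by nlinarith [mul_nonneg hC₀ htm, mul_nonneg hC₀ htq, mul_nonneg hK0 htq]
  · calc _ ≤ C₀ * (|t| ^ min 3 q + |t| ^ q) :=
          abs_abs_one_add_rpow_sub_taylor_le_of_half_le hq ht.le
      _ ≤ _ := by nlinarith [mul_nonneg hK0 htm, mul_nonneg hK0 htq]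

theorem exists_abs_rpow_sub_one_sub_mul_le_sq {α : ℝ} (hα0 : 0 ≤ α) (hα1 : α ≤ 1) :
    ∃ C, 0 ≤ C ∧ ∀ A : ℝ, 0 ≤ A → |A ^ α - 1 - α * (A - 1)| ≤ C * (A - 1) ^ 2 := by
  obtain ⟨K, hK0, hK⟩ := exists_abs_rpow_sub_one_sub_mul_le α
  refine ⟨K + 6, by positivity, fun A hA => ?_⟩
  rcases le_or_gt |A - 1| (1 / 2) with h | h
  · have hA' : A ∈ Icc (1 / 2 : ℝ) (3 / 2) := by constructor <;> linarith [abs_le.mp h]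
    calc _ ≤ K * |A - 1| ^ 2 := hK A hA'
      _ ≤ (K + 6) * (A - 1) ^ 2 := by rw [sq_abs]; nlinarith [sq_nonneg (A - 1)]
  · have hbern : A ^ α ≤ 1 + α * (A - 1) := by
      simpa using rpow_one_add_le_one_add_mul_self (s := A - 1) (by linarith) hα0 hα1
    have hsq : |A - 1| ≤ 2 * (A - 1) ^ 2 := by
      rw [← sq_abs]; nlinarith
    rw [abs_of_nonpos (by linarith)]
    nlinarith [Real.rpow_nonneg hA α, abs_nonneg (A - 1), le_abs_self (A - 1),
      mul_le_mul_of_nonneg_left (le_abs_self (A - 1)) hα0, sq_nonneg (A - 1)]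

theorem abs_rpow_le_sq_add_abs_rpow {r s : ℝ} (h2r : 2 ≤ r) (hrs : r ≤ s) (t : ℝ) :
    |t| ^ r ≤ t ^ 2 + |t| ^ s := by
  simpa [Real.rpow_two] using Real.rpow_le_rpow_add_rpow (abs_nonneg t) two_pos h2r hrs

section Integral

variable {X : Type*} [MeasurableSpace X] {μ : Measure X} {f : X → ℝ}

theorem integral_one_add_mul_add_mul_sq [IsProbabilityMeasure μ] (hf : Integrable f μ)
    (hf2 : Integrable (fun x => f x ^ 2) μ) (hf0 : ∫ x, f x ∂μ = 0) (a b : ℝ) :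
    ∫ x, (1 + a * f x + b * f x ^ 2) ∂μ = 1 + b * ∫ x, f x ^ 2 ∂μ := by
  have hlin : Integrable (fun x => 1 + a * f x) μ := (integrable_const 1).add (hf.const_mul a)
  rw [integral_add hlin (hf2.const_mul b),
    integral_add (integrable_const 1) (hf.const_mul a), integral_const_mul, integral_const_mul,
    hf0]
  simp

theorem abs_integral_comp_sub_le [IsProbabilityMeasure μ] {G H : ℝ → ℝ} {a b : ℝ}
    (hGH : ∀ t, |G t - (1 + a * t + b * t ^ 2)| ≤ H t) (hf : Integrable f μ)
    (hf2 : Integrable (fun x => f x ^ 2) μ) (hf0 : ∫ x, f x ∂μ = 0)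
    (hG : Integrable (fun x => G (f x)) μ) (hH : Integrable (fun x => H (f x)) μ) :
    |∫ x, G (f x) ∂μ - (1 + b * ∫ x, f x ^ 2 ∂μ)| ≤ ∫ x, H (f x) ∂μ := by
  have hquad : Integrable (fun x => 1 + a * f x + b * f x ^ 2) μ :=
    ((integrable_const 1).add (hf.const_mul a)).add (hf2.const_mul b)
  rw [← integral_one_add_mul_add_mul_sq hf hf2 hf0 a, ← integral_sub hG hquad]
  exact (abs_integral_le_integral_abs).trans
    (integral_mono (hG.sub hquad).abs hH fun x => hGH (f x))

theorem MeasureTheory.MemLp.integrable_abs_rpow {p : ℝ} (hp : 0 < p)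
    (hf : MemLp f (ENNReal.ofReal p) μ) :
    Integrable (fun x => |f x| ^ p) μ := by
  simpa [ENNReal.toReal_ofReal hp.le] using
    hf.integrable_norm_rpow (by simpa using hp) ENNReal.ofReal_ne_top

theorem MeasureTheory.MemLp.integrable_abs_rpow_of_two_le {r s : ℝ} (h2r : 2 ≤ r) (hrs : r ≤ s)
    (hf : MemLp f 2 μ) (hfs : Integrable (fun x => |f x| ^ s) μ) :
    Integrable (fun x => |f x| ^ r) μ :=
  (hf.integrable_sq.add hfs).mono'
    (hf.aestronglyMeasurable.aemeasurable.abs.pow_const r).aestronglyMeasurable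
    (.of_forall fun x => by
      rw [Real.norm_eq_abs, abs_of_nonneg (by positivity)]
      exact abs_rpow_le_sq_add_abs_rpow h2r hrs (f x))

theorem integral_abs_rpow_le_integral_sq_add {r s : ℝ} (h2r : 2 ≤ r) (hrs : r ≤ s)
    (hf : MemLp f 2 μ) (hfs : Integrable (fun x => |f x| ^ s) μ) :
    ∫ x, |f x| ^ r ∂μ ≤ ∫ x, f x ^ 2 ∂μ + ∫ x, |f x| ^ s ∂μ := by
  rw [← integral_add hf.integrable_sq hfs]
  exact integral_mono (hf.integrable_abs_rpow_of_two_le h2r hrs hfs) (hf.integrable_sq.add hfs)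
    fun x => abs_rpow_le_sq_add_abs_rpow h2r hrs (f x)

end Integral

theorem abs_rpow_two_div_sub_le {q C₁ C₂ A S N M : ℝ} (hq : 2 ≤ q) (hC₁ : 0 ≤ C₁)
    (hC₂ : 0 ≤ C₂) (hM : 0 ≤ M) (hMSN : M ≤ S + 2 * N)
    (hA : |A - (1 + q * (q - 1) / 2 * S)| ≤ C₁ * M)
    (hout : |A ^ (2 / q) - 1 - 2 / q * (A - 1)| ≤ C₂ * (A - 1) ^ 2) :
    |A ^ (2 / q) - (1 + S) - (q - 2) * S| ≤
      (C₂ * (2 * (q * (q - 1) / 2) ^ 2 + 16 * C₁ ^ 2) + C₁) * (M + N ^ 2 + S ^ 2) := by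
  set c := q * (q - 1) / 2
  set E := A - (1 + c * S)
  have hq0 : 0 < q := by linarith
  -- `2 / q * c = q - 1`: the second-order terms cancel.
  have hsplit : A ^ (2 / q) - (1 + S) - (q - 2) * S =
      (A ^ (2 / q) - 1 - 2 / q * (A - 1)) + 2 / q * E := by
    simp only [E, c]; field_simp; ring
  have hE : |2 / q * E| ≤ C₁ * M := by
    rw [abs_mul, abs_of_pos (by positivity)]
    exact (mul_le_of_le_one_left (abs_nonneg E) ((div_le_one hq0).2 hq)).trans hA
  have hA1 : (A - 1) ^ 2 ≤ (2 * c ^ 2 + 16 * C₁ ^ 2) * (N ^ 2 + S ^ 2) := by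
    have h1 : (A - 1) ^ 2 ≤ 2 * c ^ 2 * S ^ 2 + 2 * E ^ 2 := by
      nlinarith [sq_nonneg (c * S - E)]
    have h2 : E ^ 2 ≤ C₁ ^ 2 * M ^ 2 := by
      rw [← mul_pow, ← sq_abs E]; exact pow_le_pow_left₀ (abs_nonneg E) hA 2
    have h3 : M ^ 2 ≤ 2 * S ^ 2 + 8 * N ^ 2 := by
      nlinarith [pow_le_pow_left₀ hM hMSN 2, sq_nonneg (S - 2 * N)]
    nlinarith [mul_le_mul_of_nonneg_left h3 (sq_nonneg C₁), sq_nonneg c, sq_nonneg N]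
  calc _ ≤ C₂ * (A - 1) ^ 2 + C₁ * M := by
        rw [hsplit]; exact (abs_add_le _ _).trans (add_le_add hout hE)
    _ ≤ _ := by
        nlinarith [mul_le_mul_of_nonneg_left hA1 hC₂, mul_nonneg hC₁ (sq_nonneg N),
          mul_nonneg hC₁ (sq_nonneg S),
          mul_nonneg (mul_nonneg hC₂ (by positivity : 0 ≤ 2 * c ^ 2 + 16 * C₁ ^ 2)) hM]

/-- **Elementary linearization of the Sobolev ratio.** For every real `q > 2` there is
`C_q ≥ 0` such that for every probability space `(X, 𝔪)` and every
`f ∈ L²(𝔪) ∩ L^q(𝔪)` with `∫ f d𝔪 = 0`,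
`| (∫|1+f|^q)^{2/q} − ∫(1+f)² − (q−2)∫f² | ≤ C_q (∫(|f|^{3∧q}+|f|^q) + (∫|f|^q)² + (∫f²)²)`. -/
theorem sobolev_linearization (q : ℝ) (hq : 2 < q) :
    ∃ C : ℝ, 0 ≤ C ∧
      ∀ (X : Type*) [MeasurableSpace X] (m : Measure X), IsProbabilityMeasure m →
        ∀ f : X → ℝ, MemLp f 2 m → MemLp f (ENNReal.ofReal q) m →
          (∫ x, f x ∂m) = 0 →
          abs ((∫ x, |1 + f x| ^ q ∂m) ^ (2 / q) - (∫ x, (1 + f x) ^ 2 ∂m) -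
              (q - 2) * ∫ x, f x ^ 2 ∂m) ≤
            C * ((∫ x, (|f x| ^ min 3 q + |f x| ^ q) ∂m) +
                 (∫ x, |f x| ^ q ∂m) ^ 2 + (∫ x, f x ^ 2 ∂m) ^ 2) := by
  obtain ⟨C₁, hC₁, htaylor⟩ := exists_abs_abs_one_add_rpow_sub_taylor_le hq
  obtain ⟨C₂, hC₂, hout⟩ := exists_abs_rpow_sub_one_sub_mul_le_sq (α := 2 / q) (by positivity)
    ((div_le_one (by linarith)).2 hq.le)
  refine ⟨C₂ * (2 * (q * (q - 1) / 2) ^ 2 + 16 * C₁ ^ 2) + C₁, by positivity, ?_⟩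
  intro X _ m _ f hf2 hfq hf0
  have hf := hf2.integrable one_le_two
  have hfq' := hfq.integrable_abs_rpow (by linarith)
  have h2m : 2 ≤ min 3 q := le_min (by norm_num) hq.le
  have hfm := hf2.integrable_abs_rpow_of_two_le h2m (min_le_right 3 q) hfq'
  have hA := abs_integral_comp_sub_le (G := fun t => |1 + t| ^ q)
    (H := fun t => C₁ * (|t| ^ min 3 q + |t| ^ q)) htaylor hf hf2.integrable_sq hf0
    (((memLp_const (1 : ℝ)).add hfq).integrable_abs_rpow (by linarith))
    ((hfm.add hfq').const_mul C₁)
  rw [integral_const_mul] at hA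
  have hsq : ∫ x, (1 + f x) ^ 2 ∂m = 1 + ∫ x, f x ^ 2 ∂m := by
    simpa [add_sq, mul_comm] using integral_one_add_mul_add_mul_sq hf hf2.integrable_sq hf0 2 1
  rw [hsq]
  refine abs_rpow_two_div_sub_le hq.le hC₁ hC₂ (integral_nonneg fun x => by positivity) ?_ hA
    (hout _ (integral_nonneg fun x => by positivity))
  rw [integral_add hfm hfq']
  linarith [integral_abs_rpow_le_integral_sq_add h2m (min_le_right 3 q) hf2 hfq']
end

section
/- Let (X, d) be a complete separable metric space and let μ, ν be finite Borel measures on X. Let 1 ≤ p < q < ∞ and C > 0, and assume that (∫ |φ|^q dν)^{1/q} ≤ C · (∫ |φ|^p dμ)^{1/p} for every bounded Lipschitz function φ : X → ℝ. Then ν is purely atomic: there exists a countable set D ⊆ X with ν(X ∖ D) = 0; moreover, for every x ∈ X one has μ({x}) ≥ C^{−p} · (ν({x}))^{p/q}. -/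
/-!
Testing the inequality against the Lipschitz functions `thickenedIndicator δ F`, which lie between
the indicators of a closed set `F` and of its `δ`-thickening, and letting `δ → 0` gives
`ν F ≤ C^q μ(F)^(q/p)`; by regularity of `ν` this holds for every Borel set. At a point this is the
lower bound on `μ {x}`. Off the countable set `D` of atoms of `μ`, the measure `μ` is diffuse, so
`X` splits into countably many Borel pieces of `μ`-measure at most `ε` on `Dᶜ`; since `q / p > 1`,
summing the bound over the pieces gives `ν Dᶜ ≤ C^q ε^(q/p - 1) μ X`, which tends to `0` with `ε`.
-/

open MeasureTheory Set Filter Topology Function Metric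
open scoped ENNReal NNReal

namespace ENNReal

theorem rpow_le_rpow_sub_one_mul {a ε : ℝ≥0∞} (ha : a ≤ ε) {r : ℝ} (hr : 1 ≤ r) :
    a ^ r ≤ ε ^ (r - 1) * a := by
  calc a ^ r = a ^ (r - 1) * a ^ (1 : ℝ) := by
        rw [← rpow_add_of_nonneg _ _ (by linarith) zero_le_one, sub_add_cancel]
    _ ≤ ε ^ (r - 1) * a := by rw [rpow_one]; gcongr

theorem le_ofReal_rpow_mul_rpow_of_toReal {a b : ℝ≥0∞} (ha : a ≠ ∞) (hb : b ≠ ∞)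
    {p q C : ℝ} (hp : 0 < p) (hq : 0 < q) (hC : 0 ≤ C)
    (h : a.toReal ^ (1 / q) ≤ C * b.toReal ^ (1 / p)) :
    a ≤ ENNReal.ofReal (C ^ q) * b ^ (q / p) := by
  lift a to ℝ≥0 using ha
  lift b to ℝ≥0 using hb
  simp only [coe_toReal] at h
  have h_pow_q : (a : ℝ) ≤ C ^ q * (b : ℝ) ^ (q / p) := by
    have := Real.rpow_le_rpow (by positivity) h hq.le
    rwa [← Real.rpow_mul a.coe_nonneg, one_div_mul_cancel hq.ne', Real.rpow_one,
      Real.mul_rpow hC (by positivity), ← Real.rpow_mul b.coe_nonneg, one_div_mul_eq_div] at this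
  rw [← ofReal_coe_nnreal, ← ofReal_coe_nnreal (p := b),
    ofReal_rpow_of_nonneg b.coe_nonneg (by positivity), ← ofReal_mul (by positivity)]
  exact ofReal_le_ofReal h_pow_q

theorem ofReal_rpow_neg_mul_rpow_le {a b : ℝ≥0∞} {p q C : ℝ} (hp : 0 < p) (hq : 0 < q)
    (hC : 0 < C) (h : a ≤ ENNReal.ofReal (C ^ q) * b ^ (q / p)) :
    ENNReal.ofReal (C ^ (-p)) * a ^ (p / q) ≤ b := by
  have h_pow : a ^ (p / q) ≤ ENNReal.ofReal (C ^ p) * b := by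
    calc a ^ (p / q) ≤ (ENNReal.ofReal (C ^ q) * b ^ (q / p)) ^ (p / q) := by gcongr
      _ = ENNReal.ofReal (C ^ p) * b := by
        rw [mul_rpow_of_nonneg _ _ (by positivity), ofReal_rpow_of_nonneg (by positivity)
          (by positivity), ← Real.rpow_mul hC.le, ← rpow_mul,
          show q * (p / q) = p by field_simp, show q / p * (p / q) = 1 by field_simp, rpow_one]
  calc ENNReal.ofReal (C ^ (-p)) * a ^ (p / q)
      ≤ ENNReal.ofReal (C ^ (-p)) * (ENNReal.ofReal (C ^ p) * b) := by gcongr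
    _ = b := by
      rw [← mul_assoc, ← ofReal_mul (by positivity), ← Real.rpow_add hC, neg_add_cancel,
        Real.rpow_zero, ofReal_one, one_mul]

end ENNReal

section LipschitzTest

variable {X : Type*} [PseudoMetricSpace X] [MeasurableSpace X]

def BoundedLipschitzLqLeLp (μ ν : Measure X) (p q C : ℝ) : Prop :=
  ∀ φ : X → ℝ, (∃ K : NNReal, LipschitzWith K φ) → (∃ M : ℝ, ∀ x, |φ x| ≤ M) →
    (∫ x, |φ x| ^ q ∂ν) ^ (1 / q) ≤ C * (∫ x, |φ x| ^ p ∂μ) ^ (1 / p)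

namespace BoundedLipschitzLqLeLp

variable [OpensMeasurableSpace X] {μ ν : Measure X} [IsFiniteMeasure μ] [IsFiniteMeasure ν]
  {p q C : ℝ}

theorem toReal_rpow_le (h : BoundedLipschitzLqLeLp μ ν p q C) (hp : 0 < p) (hq : 0 < q)
    (hC : 0 ≤ C) {F G : Set X} (hF : MeasurableSet F) (hG : MeasurableSet G) {φ : X → ℝ}
    {K : ℝ≥0} (hφ : LipschitzWith K φ) (hFφ : F.indicator 1 ≤ φ) (hφG : φ ≤ G.indicator 1) :
    (ν F).toReal ^ (1 / q) ≤ C * (μ G).toReal ^ (1 / p) := by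
  have hφ0 : ∀ x, 0 ≤ φ x := fun x =>
    (indicator_nonneg (fun _ _ => zero_le_one) x).trans (hFφ x)
  have hφ1 : ∀ x, |φ x| ≤ 1 := fun x =>
    (abs_of_nonneg (hφ0 x)).trans_le <|
      (hφG x).trans (indicator_le_self' (fun _ _ => zero_le_one) x)
  have integrable_rpow : ∀ {r : ℝ} (m : Measure X) [IsFiniteMeasure m], 0 ≤ r →
      Integrable (fun x => |φ x| ^ r) m := fun m _ hr =>
    .of_bound (hφ.continuous.abs.rpow_const fun _ => .inr hr).aestronglyMeasurable 1 <|
      .of_forall fun x => by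
        rw [Real.norm_eq_abs, abs_of_nonneg (by positivity)]
        exact Real.rpow_le_one (abs_nonneg _) (hφ1 x) hr
  have hνF : (ν F).toReal ≤ ∫ x, |φ x| ^ q ∂ν := by
    rw [← measureReal_def, ← integral_indicator_one hF]
    refine integral_mono_of_nonneg (.of_forall (indicator_nonneg fun _ _ => zero_le_one))
      (integrable_rpow ν hq.le) (.of_forall fun x => ?_)
    by_cases hx : x ∈ F
    · have hφx : |φ x| = 1 :=
        le_antisymm (hφ1 x) (by simpa [hx] using (hFφ x).trans (le_abs_self _))
      simp [hx, hφx]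
    · simp only [indicator_of_notMem hx]
      positivity
  have hμG : ∫ x, |φ x| ^ p ∂μ ≤ (μ G).toReal := by
    rw [← measureReal_def, ← integral_indicator_one hG]
    refine integral_mono_of_nonneg (.of_forall fun x => by positivity)
      ((integrable_const 1).indicator hG) (.of_forall fun x => ?_)
    by_cases hx : x ∈ G
    · simpa [hx] using Real.rpow_le_one (abs_nonneg _) (hφ1 x) hp.le
    · have hφx : φ x = 0 := le_antisymm (by simpa [hx] using hφG x) (hφ0 x)
      simp [hx, hφx, Real.zero_rpow hp.ne']
  calc (ν F).toReal ^ (1 / q) ≤ (∫ x, |φ x| ^ q ∂ν) ^ (1 / q) := by gcongr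
    _ ≤ C * (∫ x, |φ x| ^ p ∂μ) ^ (1 / p) := h φ ⟨K, hφ⟩ ⟨1, hφ1⟩
    _ ≤ C * (μ G).toReal ^ (1 / p) := by gcongr

theorem measure_le_of_isClosed (h : BoundedLipschitzLqLeLp μ ν p q C) (hp : 0 < p)
    (hq : 0 < q) (hC : 0 ≤ C) {F : Set X} (hF : IsClosed F) :
    ν F ≤ ENNReal.ofReal (C ^ q) * μ F ^ (q / p) := by
  have le_thickening : ∀ δ > 0,
      ν F ≤ ENNReal.ofReal (C ^ q) * μ (thickening δ F) ^ (q / p) := by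
    intro δ hδ
    refine ENNReal.le_ofReal_rpow_mul_rpow_of_toReal (measure_ne_top _ _) (measure_ne_top _ _)
      hp hq hC <| h.toReal_rpow_le hp hq hC hF.measurableSet isOpen_thickening.measurableSet
        (NNReal.isometry_coe.lipschitz.comp (lipschitzWith_thickenedIndicator hδ F))
        (fun x => ?_) (fun x => ?_)
    · by_cases hx : x ∈ F
      · simp [hx, thickenedIndicator_one hδ F hx]
      · simp [hx]
    · by_cases hx : x ∈ thickening δ F
      · simpa [hx] using thickenedIndicator_le_one hδ F x
      · simp [hx, thickenedIndicator_zero hδ F hx]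
  have hlim : Tendsto (fun δ => ENNReal.ofReal (C ^ q) * μ (thickening δ F) ^ (q / p))
      (𝓝[>] 0) (𝓝 (ENNReal.ofReal (C ^ q) * μ F ^ (q / p))) :=
    ENNReal.Tendsto.const_mul (((ENNReal.continuous_rpow_const).tendsto _).comp
      (tendsto_measure_thickening_of_isClosed ⟨1, one_pos, measure_ne_top _ _⟩ hF))
      (.inr ENNReal.ofReal_ne_top)
  exact ge_of_tendsto hlim (eventually_nhdsWithin_of_forall le_thickening)

end BoundedLipschitzLqLeLp

end LipschitzTest

section Regularity

variable {X : Type*} [TopologicalSpace X] [MeasurableSpace X]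

theorem measure_le_mul_rpow_of_forall_isClosed {μ ν : Measure X} [ν.WeaklyRegular]
    [IsFiniteMeasure ν] {K : ℝ≥0∞} {r : ℝ} (hr : 0 ≤ r)
    (h : ∀ F, IsClosed F → ν F ≤ K * μ F ^ r) {s : Set X} (hs : MeasurableSet s) :
    ν s ≤ K * μ s ^ r := by
  rw [hs.measure_eq_iSup_isClosed_of_ne_top (measure_ne_top ν s)]
  exact iSup₂_le fun F hFs => iSup_le fun hF => (h F hF).trans (by gcongr)

theorem exists_measurable_partition_measure_le [LindelofSpace X] [OpensMeasurableSpace X]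
    (m : Measure X) [m.OuterRegular] [NullSingletonClass m] {ε : ℝ≥0∞} (hε : 0 < ε) :
    ∃ E : ℕ → Set X, (∀ n, MeasurableSet (E n)) ∧ Pairwise (Disjoint on E) ∧
      ⋃ n, E n = univ ∧ ∀ n, m (E n) ≤ ε := by
  have small_nhds : ∀ x : X, ∃ U, U ⊇ {x} ∧ IsOpen U ∧ m U < ε := fun x =>
    Set.exists_isOpen_lt_of_lt _ _ (by rwa [measure_singleton])
  choose U hxU hUo hUε using small_nhds
  obtain ⟨t, htc, htU⟩ := countable_cover_nhds fun x => (hUo x).mem_nhds (hxU x rfl)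
  rcases t.eq_empty_or_nonempty with rfl | hne
  · refine ⟨fun _ => ∅, fun _ => .empty, fun _ _ _ => disjoint_empty _, ?_, fun _ => by simp⟩
    simpa [eq_comm] using htU
  obtain ⟨g, rfl⟩ := htc.exists_eq_range hne
  refine ⟨disjointed (U ∘ g), .disjointed fun n => (hUo _).measurableSet,
    disjoint_disjointed _, ?_, fun n => (measure_mono (disjointed_subset _ n)).trans (hUε _).le⟩
  rw [iUnion_disjointed]
  simpa [biUnion_range] using htU

theorem measure_univ_eq_zero_of_le_mul_rpow [LindelofSpace X] [OpensMeasurableSpace X]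
    {m ν : Measure X} [IsFiniteMeasure m] [m.OuterRegular] [NullSingletonClass m] {K : ℝ≥0∞}
    (hK : K ≠ ∞) {r : ℝ} (hr : 1 < r) (h : ∀ s, MeasurableSet s → ν s ≤ K * m s ^ r) :
    ν univ = 0 := by
  have bound : ∀ ε > 0, ν univ ≤ K * ε ^ (r - 1) * m univ := by
    intro ε hε
    obtain ⟨E, hEm, hEd, hEU, hEε⟩ := exists_measurable_partition_measure_le m hε
    calc ν univ ≤ ∑' n, ν (E n) := hEU ▸ measure_iUnion_le _
      _ ≤ ∑' n, K * ε ^ (r - 1) * m (E n) := ENNReal.tsum_le_tsum fun n =>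
          (h _ (hEm n)).trans <| by
            rw [mul_assoc]; gcongr; exact ENNReal.rpow_le_rpow_sub_one_mul (hEε n) hr.le
      _ = K * ε ^ (r - 1) * m univ := by
          rw [ENNReal.tsum_mul_left, ← measure_iUnion hEd hEm, hEU]
  have hlim : Tendsto (fun n : ℕ => K * ((n : ℝ≥0∞)⁻¹) ^ (r - 1) * m univ) atTop (𝓝 0) := by
    have hpow := ((ENNReal.continuous_rpow_const (y := r - 1)).tendsto 0).comp
      ENNReal.tendsto_inv_nat_nhds_zero
    rw [ENNReal.zero_rpow_of_pos (by linarith)] at hpow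
    simpa using ENNReal.Tendsto.mul_const (ENNReal.Tendsto.const_mul hpow (.inr hK))
      (.inr (measure_ne_top m univ))
  exact le_antisymm (ge_of_tendsto' hlim fun n => bound _ (by simp)) zero_le

end Regularity

namespace MeasureTheory.Measure

variable {X : Type*} [MeasurableSpace X] [MeasurableSingletonClass X]

theorem countable_setOf_measure_singleton_pos (μ : Measure X) [SFinite μ] :
    {x | 0 < μ {x}}.Countable := by
  simpa [ofPred_eq_eq_singleton] using countable_meas_level_set_pos (μ := μ) measurable_id

theorem nullSingletonClass_restrict_compl_setOf_measure_singleton_pos (μ : Measure X) :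
    NullSingletonClass (μ.restrict {x | 0 < μ {x}}ᶜ) where
  measure_singleton x := by
    rw [restrict_apply (measurableSet_singleton x)]
    by_cases hx : 0 < μ {x}
    · simp [hx]
    · exact measure_mono_null inter_subset_left (nonpos_iff_eq_zero.1 (not_lt.1 hx))

end MeasureTheory.Measure

theorem lions_concentration_compactness_general
    {X : Type*} [MetricSpace X] [TopologicalSpace.SeparableSpace X]
    [MeasurableSpace X] [BorelSpace X]
    (μ ν : Measure X) [IsFiniteMeasure μ] [IsFiniteMeasure ν]
    (p q C : ℝ) (hp : 1 ≤ p) (hpq : p < q) (hC : 0 < C)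
    (hSob : ∀ φ : X → ℝ, (∃ K : NNReal, LipschitzWith K φ) → (∃ M : ℝ, ∀ x, |φ x| ≤ M) →
      (∫ x, |φ x| ^ q ∂ν) ^ (1 / q) ≤ C * (∫ x, |φ x| ^ p ∂μ) ^ (1 / p)) :
    (∃ D : Set X, D.Countable ∧ ν Dᶜ = 0) ∧
      ∀ x : X, ENNReal.ofReal (C ^ (-p)) * ν {x} ^ (p / q) ≤ μ {x} := by
  have hp0 : 0 < p := by linarith
  have hq0 : 0 < q := by linarith
  have hbound : ∀ s, MeasurableSet s → ν s ≤ ENNReal.ofReal (C ^ q) * μ s ^ (q / p) :=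
    fun s => measure_le_mul_rpow_of_forall_isClosed (by positivity)
      fun F => BoundedLipschitzLqLeLp.measure_le_of_isClosed hSob hp0 hq0 hC.le
  set D := {x | 0 < μ {x}}
  have hD : D.Countable := μ.countable_setOf_measure_singleton_pos
  refine ⟨⟨D, hD, ?_⟩, fun x =>
    ENNReal.ofReal_rpow_neg_mul_rpow_le hp0 hq0 hC (hbound {x} (measurableSet_singleton x))⟩
  have := μ.nullSingletonClass_restrict_compl_setOf_measure_singleton_pos
  have hνD := measure_univ_eq_zero_of_le_mul_rpow (m := μ.restrict Dᶜ) (ν := ν.restrict Dᶜ)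
    ENNReal.ofReal_ne_top ((one_lt_div hp0).2 hpq) fun s hs => by
      simpa only [Measure.restrict_apply hs] using hbound _ (hs.inter hD.measurableSet.compl)
  rwa [Measure.restrict_apply_univ] at hνD

/-- **Concentration–compactness lemma of Lions.** Let `(X,d)` be a complete separable
metric space, `μ, ν` finite Borel measures, `1 ≤ p < q < ∞`, `C > 0`, and assume
`(∫|φ|^q dν)^{1/q} ≤ C (∫|φ|^p dμ)^{1/p}` for every bounded Lipschitz `φ : X → ℝ`.
Then `ν` is purely atomic (concentrated on a countable set) and
`μ({x}) ≥ C^{-p} ν({x})^{p/q}` for every `x ∈ X`. -/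
theorem lions_concentration_compactness
    {X : Type*} [MetricSpace X] [CompleteSpace X] [TopologicalSpace.SeparableSpace X]
    [MeasurableSpace X] [BorelSpace X]
    (μ ν : Measure X) [IsFiniteMeasure μ] [IsFiniteMeasure ν]
    (p q C : ℝ) (hp : 1 ≤ p) (hpq : p < q) (hC : 0 < C)
    (hSob : ∀ φ : X → ℝ, (∃ K : NNReal, LipschitzWith K φ) → (∃ M : ℝ, ∀ x, |φ x| ≤ M) →
      (∫ x, |φ x| ^ q ∂ν) ^ (1 / q) ≤ C * (∫ x, |φ x| ^ p ∂μ) ^ (1 / p)) :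
    (∃ D : Set X, D.Countable ∧ ν Dᶜ = 0) ∧
      ∀ x : X, ENNReal.ofReal (C ^ (-p)) * ν {x} ^ (p / q) ≤ μ {x} :=
  lions_concentration_compactness_general μ ν p q C hp hpq hC hSob
end
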